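/- In the design-based stratified setup under Assumption 1, with k ≥ 2, define R_i = Y_i(1)/η + Y_i(0)/(1−η) with η = ℓ/k, and R̄_j = (1/k)Σ_{i∈λ_j}R_i. Then the difference-in-means estimator satisfies the identity Δ̂_n − Δ_n = (1/n)Σ_{j=1}^m Σ_{i∈λ_j}(R_i − R̄_j)D_i, and its variance satisfies n·Var[Δ̂_n] = (η(1−η)/((k−1)m)) Σ_{j=1}^m Σ_{i∈λ_j}(R_i − R̄_j)². -/

import Mathlib

open MeasureTheory ProbabilityTheory Filter Finset Topology

noncomputable section

namespace DesignBased

/-- The uniform (probability) measure on a finite set of outcomes. -/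
def uniformFinset {α : Type*} [MeasurableSpace α] (S : Finset α) : Measure α :=
  ((S.card : ENNReal))⁻¹ • ∑ d ∈ S, Measure.dirac d

/-- Assignment vectors for a stratum of size `k` with exactly `ℓ` treated units. -/
def assignSet (k ℓ : ℕ) : Finset (Fin k → Bool) :=
  Finset.univ.filter fun d => (Finset.univ.filter fun i => d i = true).card = ℓ

/-- Assumption 1: the treatment assignment `D` is distributed as the product, over the `m`
strata, of the uniform distribution on assignment vectors with exactly `ℓ` treated units. -/
def Assumption1 {Ω : Type*} [MeasurableSpace Ω] (P : Measure Ω) (m k ℓ : ℕ)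
    (D : Ω → Fin m → Fin k → Bool) : Prop :=
  Measurable D ∧
    Measure.map D P = Measure.pi fun _ : Fin m => uniformFinset (assignSet k ℓ)

variable {Ω : Type*}

/-- The difference-in-means estimator. -/
def hatDelta (m k ℓ : ℕ) (Y1 Y0 : Fin m → Fin k → ℝ)
    (D : Ω → Fin m → Fin k → Bool) (ω : Ω) : ℝ :=
  ((m : ℝ) * ℓ)⁻¹ * ∑ j, ∑ i, (if D ω j i then Y1 j i else 0)
    - ((m : ℝ) * ((k : ℝ) - ℓ))⁻¹ * ∑ j, ∑ i, (if D ω j i then 0 else Y0 j i)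

/-- The finite population average treatment effect. -/
def Delta (m k : ℕ) (Y1 Y0 : Fin m → Fin k → ℝ) : ℝ :=
  ((m : ℝ) * k)⁻¹ * ∑ j, ∑ i, (Y1 j i - Y0 j i)

/-- The stratum-level difference-in-means estimator. -/
def hatDeltaJ (m k ℓ : ℕ) (Y1 Y0 : Fin m → Fin k → ℝ)
    (D : Ω → Fin m → Fin k → Bool) (j : Fin m) (ω : Ω) : ℝ :=
  (ℓ : ℝ)⁻¹ * ∑ i, (if D ω j i then Y1 j i else 0)
    - ((k : ℝ) - ℓ)⁻¹ * ∑ i, (if D ω j i then 0 else Y0 j i)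

/-- The stratum-level average treatment effect. -/
def DeltaJ (m k : ℕ) (Y1 Y0 : Fin m → Fin k → ℝ) (j : Fin m) : ℝ :=
  (k : ℝ)⁻¹ * ∑ i, (Y1 j i - Y0 j i)

/-- The first stratum of the `j`-th pair of strata (strata are paired adjacently). -/
def pairA (m : ℕ) (j : Fin (m / 2)) : Fin m := ⟨2 * j.1, by have := j.2; omega⟩

/-- The second stratum of the `j`-th pair of strata. -/
def pairB (m : ℕ) (j : Fin (m / 2)) : Fin m := ⟨2 * j.1 + 1, by have := j.2; omega⟩

/-- τ̂²ₙ. -/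
def tauSq (m k ℓ : ℕ) (Y1 Y0 : Fin m → Fin k → ℝ)
    (D : Ω → Fin m → Fin k → Bool) (ω : Ω) : ℝ :=
  (m : ℝ)⁻¹ * ∑ j, (hatDeltaJ m k ℓ Y1 Y0 D j ω) ^ 2

/-- κ̂ₙ. -/
def kappaHat (m k ℓ : ℕ) (Y1 Y0 : Fin m → Fin k → ℝ)
    (D : Ω → Fin m → Fin k → Bool) (ω : Ω) : ℝ :=
  2 / (m : ℝ) * ∑ j : Fin (m / 2),
    hatDeltaJ m k ℓ Y1 Y0 D (pairA m j) ω * hatDeltaJ m k ℓ Y1 Y0 D (pairB m j) ω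

/-- The paired-strata variance estimator V̂ₙ. -/
def hatV (m k ℓ : ℕ) (Y1 Y0 : Fin m → Fin k → ℝ)
    (D : Ω → Fin m → Fin k → Bool) (ω : Ω) : ℝ :=
  (m : ℝ)⁻¹ * (tauSq m k ℓ Y1 Y0 D ω - kappaHat m k ℓ Y1 Y0 D ω)

/-- The Imai variance estimator V̂ᴵᴹₙ. -/
def hatVIM (m k ℓ : ℕ) (Y1 Y0 : Fin m → Fin k → ℝ)
    (D : Ω → Fin m → Fin k → Bool) (ω : Ω) : ℝ :=
  ((m : ℝ) * ((m : ℝ) - 1))⁻¹ *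
    ∑ j, (hatDeltaJ m k ℓ Y1 Y0 D j ω - hatDelta m k ℓ Y1 Y0 D ω) ^ 2

/-- The standard normal cumulative distribution function. -/
def stdNormCDF (x : ℝ) : ℝ := ((gaussianReal 0 1) (Set.Iic x)).toReal

/-- Conditional variance of `Z` given the sub-σ-algebra `m0`. -/
def condVar' {Ω' : Type*} (m0 : MeasurableSpace Ω') {mΩ : MeasurableSpace Ω'} (P : Measure Ω')
    (Z : Ω' → ℝ) : Ω' → ℝ :=
  P[fun ω => (Z ω - (P[Z|m0]) ω) ^ 2 | m0]

/-- The transformed outcome `Rᵢ = Yᵢ(1)/η + Yᵢ(0)/(1−η)`. -/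
def Rout (m k ℓ : ℕ) (Y1 Y0 : Fin m → Fin k → ℝ) (j : Fin m) (i : Fin k) : ℝ :=
  Y1 j i / ((ℓ : ℝ) / k) + Y0 j i / (1 - (ℓ : ℝ) / k)

/-- The stratum average `R̄ⱼ` of the transformed outcomes. -/
def Rbar (m k ℓ : ℕ) (Y1 Y0 : Fin m → Fin k → ℝ) (j : Fin m) : ℝ :=
  (k : ℝ)⁻¹ * ∑ i, Rout m k ℓ Y1 Y0 j i

/-! Within a stratum the centred outcomes `Rᵢ - R̄ⱼ` sum to zero, and since exactly `ℓ` units are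
treated, `n (Δ̂ₙ - Δₙ)` is the sum over strata of the linear statistics `∑ᵢ (Rᵢ - R̄ⱼ) Dᵢ`.
Under the uniform design the indicators of a stratum are exchangeable with `E[Dᵢ] = ℓ/k` and
`E[Dᵢ Dᵢ'] = ℓ(ℓ-1)/(k(k-1))` for `i ≠ i'`, so a zero-sum linear statistic `∑ aᵢ Dᵢ` has
variance `ℓ(k-ℓ)/(k(k-1)) ∑ aᵢ²`; the strata are independent, so these variances add. -/

section Assignments

variable {k ℓ : ℕ}

lemma comp_perm_mem_assignSet (σ : Equiv.Perm (Fin k)) {d : Fin k → Bool}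
    (hd : d ∈ assignSet k ℓ) : d ∘ σ ∈ assignSet k ℓ := by
  simp only [assignSet, mem_filter, mem_univ, true_and, Function.comp_apply] at hd ⊢
  exact (card_equiv σ (by simp)).trans hd

lemma sum_assignSet_comp_perm {M : Type*} [AddCommMonoid M] (σ : Equiv.Perm (Fin k))
    (f : (Fin k → Bool) → M) :
    ∑ d ∈ assignSet k ℓ, f (d ∘ σ) = ∑ d ∈ assignSet k ℓ, f d :=
  sum_nbij' (· ∘ σ) (· ∘ σ.symm) (fun _ hd => comp_perm_mem_assignSet σ hd)
    (fun _ hd => comp_perm_mem_assignSet σ.symm hd) (fun d _ => by ext; simp)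
    (fun d _ => by ext; simp) (fun _ _ => rfl)

lemma assignSet_nonempty (hℓk : ℓ ≤ k) : (assignSet k ℓ).Nonempty := by
  obtain ⟨s, -, hs⟩ := exists_subset_card_eq (s := (univ : Finset (Fin k))) (by simpa using hℓk)
  exact ⟨fun i => decide (i ∈ s), by simpa [assignSet] using hs⟩

lemma sum_indicator_of_mem_assignSet {d : Fin k → Bool} (hd : d ∈ assignSet k ℓ) :
    ∑ i, (if d i then (1 : ℝ) else 0) = ℓ := by
  simp only [assignSet, mem_filter, mem_univ, true_and] at hd
  simp [sum_boole, hd]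

lemma natCast_mul_sum_assignSet_indicator (i : Fin k) :
    (k : ℝ) * ∑ d ∈ assignSet k ℓ, (if d i then (1 : ℝ) else 0) = ℓ * #(assignSet k ℓ) := by
  have hsymm : ∀ i', ∑ d ∈ assignSet k ℓ, (if d i' then (1 : ℝ) else 0)
      = ∑ d ∈ assignSet k ℓ, (if d i then (1 : ℝ) else 0) := fun i' => by
    rw [← sum_assignSet_comp_perm (Equiv.swap i i')]
    simp
  calc (k : ℝ) * ∑ d ∈ assignSet k ℓ, (if d i then (1 : ℝ) else 0)
      = ∑ i' : Fin k, ∑ d ∈ assignSet k ℓ, (if d i' then (1 : ℝ) else 0) := by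
        simp [hsymm]
    _ = ∑ d ∈ assignSet k ℓ, (ℓ : ℝ) := by
        rw [sum_comm]
        exact sum_congr rfl fun d hd => sum_indicator_of_mem_assignSet hd
    _ = ℓ * #(assignSet k ℓ) := by simp [mul_comm]

lemma natCast_sub_one_mul_sum_assignSet_indicator_mul {i i' : Fin k} (h : i ≠ i') :
    ((k : ℝ) - 1) * ∑ d ∈ assignSet k ℓ, (if d i then (1 : ℝ) else 0) * (if d i' then 1 else 0)
      = ((ℓ : ℝ) - 1) * ∑ d ∈ assignSet k ℓ, (if d i then (1 : ℝ) else 0) := by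
  set c₁ := ∑ d ∈ assignSet k ℓ, (if d i then (1 : ℝ) else 0)
  set c₂ := ∑ d ∈ assignSet k ℓ, (if d i then (1 : ℝ) else 0) * (if d i' then 1 else 0)
  have hsymm : ∀ i'', ∑ d ∈ assignSet k ℓ, (if d i then (1 : ℝ) else 0) * (if d i'' then 1 else 0)
      = c₂ + if i'' = i then c₁ - c₂ else 0 := fun i'' => by
    rcases eq_or_ne i'' i with rfl | hi''
    · simp [c₁, ← ite_and]
    · rw [if_neg hi'', add_zero, ← sum_assignSet_comp_perm (Equiv.swap i' i'')]
      simp [c₂, Equiv.swap_apply_of_ne_of_ne h hi''.symm]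
  -- Each treated unit has exactly `ℓ - 1` treated companions.
  have hrow : ∑ i'', ∑ d ∈ assignSet k ℓ,
      (if d i then (1 : ℝ) else 0) * (if d i'' then 1 else 0) = ℓ * c₁ := by
    rw [sum_comm, mul_sum]
    refine sum_congr rfl fun d hd => ?_
    rw [← mul_sum, sum_indicator_of_mem_assignSet hd, mul_comm]
  simp only [hsymm, sum_add_distrib, sum_ite_eq', mem_univ, if_true, sum_const, card_univ,
    Fintype.card_fin, nsmul_eq_mul] at hrow
  linarith

lemma natCast_mul_sum_assignSet_indicator_mul (i i' : Fin k) :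
    (k : ℝ) * (k - 1) *
        ∑ d ∈ assignSet k ℓ, (if d i then (1 : ℝ) else 0) * (if d i' then 1 else 0)
      = ℓ * #(assignSet k ℓ) * ((ℓ - 1) + if i = i' then (k : ℝ) - ℓ else 0) := by
  have h₁ := natCast_mul_sum_assignSet_indicator (ℓ := ℓ) i
  rcases eq_or_ne i i' with rfl | h
  · have hidem : ∀ d : Fin k → Bool,
        (if d i then (1 : ℝ) else 0) * (if d i then 1 else 0) = if d i then 1 else 0 :=
      fun d => by cases d i <;> simp
    simp only [hidem, if_true]
    linear_combination ((k : ℝ) - 1) * h₁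
  · rw [if_neg h]
    linear_combination (k : ℝ) * natCast_sub_one_mul_sum_assignSet_indicator_mul (ℓ := ℓ) h
      + ((ℓ : ℝ) - 1) * h₁

lemma natCast_mul_sum_assignSet_linear (a : Fin k → ℝ) :
    (k : ℝ) * ∑ d ∈ assignSet k ℓ, ∑ i, a i * (if d i then (1 : ℝ) else 0)
      = ℓ * #(assignSet k ℓ) * ∑ i, a i := by
  rw [sum_comm, mul_sum, mul_sum]
  refine sum_congr rfl fun i _ => ?_
  rw [← mul_sum, mul_left_comm, natCast_mul_sum_assignSet_indicator, mul_comm]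

lemma natCast_mul_sum_assignSet_linear_sq (a : Fin k → ℝ) :
    (k : ℝ) * (k - 1) * ∑ d ∈ assignSet k ℓ, (∑ i, a i * (if d i then (1 : ℝ) else 0)) ^ 2
      = ℓ * #(assignSet k ℓ) * ((ℓ - 1) * (∑ i, a i) ^ 2 + (k - ℓ) * ∑ i, a i ^ 2) := by
  have hexpand : ∀ d : Fin k → Bool, (∑ i, a i * (if d i then (1 : ℝ) else 0)) ^ 2
      = ∑ i, ∑ i', a i * a i' * ((if d i then (1 : ℝ) else 0) * (if d i' then 1 else 0)) :=
    fun d => by simp only [sq, sum_mul_sum, mul_mul_mul_comm]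
  have hmoment : ∀ i i', (k : ℝ) * (k - 1) * ∑ d ∈ assignSet k ℓ,
      a i * a i' * ((if d i then (1 : ℝ) else 0) * (if d i' then 1 else 0))
      = ℓ * #(assignSet k ℓ) * (a i * a i' * ((ℓ - 1) + if i = i' then (k : ℝ) - ℓ else 0)) :=
    fun i i' => by
      rw [← mul_sum, mul_left_comm, natCast_mul_sum_assignSet_indicator_mul]; ring
  simp only [hexpand]
  rw [sum_comm, mul_sum]
  simp only [sum_comm (s := assignSet k ℓ), mul_sum (s := univ) (a := (k : ℝ) * (k - 1)), hmoment]
  simp only [← mul_sum]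
  congr 1
  simp only [mul_add, mul_ite, mul_zero, sum_add_distrib, sum_ite_eq, mem_univ, if_true]
  simp only [← sum_mul, sq, sum_mul_sum]
  ring

end Assignments

section UniformFinset

variable {α : Type*} [MeasurableSpace α]

lemma isProbabilityMeasure_uniformFinset {S : Finset α} (hS : S.Nonempty) :
    IsProbabilityMeasure (uniformFinset S) := by
  constructor
  simp only [uniformFinset, Measure.smul_apply, Measure.coe_finsetSum, Finset.sum_apply,
    Measure.dirac_apply_of_mem (Set.mem_univ _), sum_const, nsmul_eq_mul, mul_one, smul_eq_mul]
  exact ENNReal.inv_mul_cancel (by exact_mod_cast hS.card_ne_zero) (ENNReal.natCast_ne_top _)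

variable [MeasurableSingletonClass α]

lemma ae_mem_uniformFinset (S : Finset α) : ∀ᵐ x ∂uniformFinset S, x ∈ S := by
  rw [ae_iff]
  simp only [uniformFinset, Measure.smul_apply, Measure.coe_finsetSum, Finset.sum_apply,
    smul_eq_mul]
  refine mul_eq_zero_of_right _ (sum_eq_zero fun d hd => ?_)
  simp [hd]

lemma integral_uniformFinset (S : Finset α) (f : α → ℝ) :
    ∫ x, f x ∂uniformFinset S = (#S : ℝ)⁻¹ * ∑ x ∈ S, f x := by
  rw [uniformFinset, integral_smul_measure,
    integral_finsetSum_measure fun _ _ => integrable_dirac enorm_lt_top]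
  simp [integral_dirac, ENNReal.toReal_inv]

end UniformFinset

theorem variance_sum_mul_indicator_assignSet {k ℓ : ℕ} (hk : 2 ≤ k) (hℓk : ℓ ≤ k)
    (a : Fin k → ℝ) (ha : ∑ i, a i = 0) :
    Var[fun d => ∑ i, a i * (if d i then (1 : ℝ) else 0); uniformFinset (assignSet k ℓ)]
      = ℓ * (k - ℓ) / (k * (k - 1)) * ∑ i, a i ^ 2 := by
  have := isProbabilityMeasure_uniformFinset (assignSet_nonempty hℓk)
  have hk₀ : (k : ℝ) ≠ 0 := by positivity
  have hk₁ : (k : ℝ) - 1 ≠ 0 := sub_ne_zero.2 (by exact_mod_cast (by omega : k ≠ 1))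
  have hcard : (#(assignSet k ℓ) : ℝ) ≠ 0 := by
    exact_mod_cast (assignSet_nonempty hℓk).card_ne_zero
  have hmean := natCast_mul_sum_assignSet_linear (ℓ := ℓ) a
  have hsq := natCast_mul_sum_assignSet_linear_sq (ℓ := ℓ) a
  rw [ha, mul_zero, mul_eq_zero, or_iff_right hk₀] at hmean
  rw [variance_eq_sub MemLp.of_discrete]
  simp only [Pi.pow_apply, integral_uniformFinset, hmean, mul_zero]
  rw [ha] at hsq
  field_simp
  linear_combination hsq

section Estimator

variable {m k ℓ : ℕ} (Y1 Y0 : Fin m → Fin k → ℝ) (D : Ω → Fin m → Fin k → Bool)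

lemma hatDelta_eq_mean_hatDeltaJ (ω : Ω) :
    hatDelta m k ℓ Y1 Y0 D ω = (m : ℝ)⁻¹ * ∑ j, hatDeltaJ m k ℓ Y1 Y0 D j ω := by
  simp only [hatDelta, hatDeltaJ, mul_inv, mul_assoc, ← mul_sum, ← mul_sub, sum_sub_distrib]

lemma Delta_eq_mean_DeltaJ : Delta m k Y1 Y0 = (m : ℝ)⁻¹ * ∑ j, DeltaJ m k Y1 Y0 j := by
  simp only [Delta, DeltaJ, mul_inv, mul_assoc, ← mul_sum]

lemma sum_Rout_sub_Rbar (hk : k ≠ 0) (j : Fin m) :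
    ∑ i, (Rout m k ℓ Y1 Y0 j i - Rbar m k ℓ Y1 Y0 j) = 0 := by
  rw [sum_sub_distrib, sum_const, card_univ, Fintype.card_fin, nsmul_eq_mul, Rbar,
    mul_inv_cancel_left₀ (Nat.cast_ne_zero.2 hk), sub_self]

lemma hatDeltaJ_sub_DeltaJ (hℓ : 0 < ℓ) (hℓk : ℓ < k) (j : Fin m) (ω : Ω)
    (hω : D ω j ∈ assignSet k ℓ) :
    hatDeltaJ m k ℓ Y1 Y0 D j ω - DeltaJ m k Y1 Y0 j
      = (k : ℝ)⁻¹ * ∑ i, (Rout m k ℓ Y1 Y0 j i - Rbar m k ℓ Y1 Y0 j) *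
          (if D ω j i then 1 else 0) := by
  have hℓ₀ : (ℓ : ℝ) ≠ 0 := by positivity
  have hk₀ : (k : ℝ) ≠ 0 := Nat.cast_ne_zero.2 (by omega)
  have hkℓ : (k : ℝ) - ℓ ≠ 0 := sub_ne_zero.2 (by exact_mod_cast hℓk.ne')
  have htreated := sum_indicator_of_mem_assignSet hω
  have hY1 : ∀ i, (if D ω j i then Y1 j i else 0) = Y1 j i * (if D ω j i then 1 else 0) :=
    fun i => by split_ifs <;> simp
  have hY0 : ∀ i, (if D ω j i then 0 else Y0 j i)
      = Y0 j i - Y0 j i * (if D ω j i then 1 else 0) := fun i => by split_ifs <;> simp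
  simp only [hatDeltaJ, DeltaJ, Rbar, Rout, hY1, hY0, sub_mul, add_mul, div_mul_eq_mul_div,
    sum_sub_distrib, sum_add_distrib, ← sum_div, ← mul_sum, htreated]
  field_simp
  ring

lemma hatDelta_sub_Delta (hℓ : 0 < ℓ) (hℓk : ℓ < k) (ω : Ω)
    (hω : ∀ j, D ω j ∈ assignSet k ℓ) :
    hatDelta m k ℓ Y1 Y0 D ω - Delta m k Y1 Y0
      = ((m : ℝ) * k)⁻¹ * ∑ j, ∑ i, (Rout m k ℓ Y1 Y0 j i - Rbar m k ℓ Y1 Y0 j) *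
          (if D ω j i then 1 else 0) := by
  simp only [hatDelta_eq_mean_hatDeltaJ, Delta_eq_mean_DeltaJ, ← mul_sub, ← sum_sub_distrib,
    hatDeltaJ_sub_DeltaJ Y1 Y0 D hℓ hℓk _ ω (hω _), mul_inv, mul_assoc, mul_sum]

end Estimator

section Design

variable [MeasurableSpace Ω] {P : Measure Ω} {m k ℓ : ℕ}
  {D : Ω → Fin m → Fin k → Bool}

lemma Assumption1.measurePreserving (hD : Assumption1 P m k ℓ D) :
    MeasurePreserving D P (Measure.pi fun _ => uniformFinset (assignSet k ℓ)) :=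
  ⟨hD.1, hD.2⟩

lemma Assumption1.ae_mem_assignSet (hD : Assumption1 P m k ℓ D) (hℓk : ℓ ≤ k) :
    ∀ᵐ ω ∂P, ∀ j, D ω j ∈ assignSet k ℓ := by
  have := isProbabilityMeasure_uniformFinset (assignSet_nonempty hℓk)
  refine ae_all_iff.2 fun j =>
    hD.measurePreserving.quasiMeasurePreserving.ae (p := fun x => x j ∈ assignSet k ℓ) ?_
  exact (measurePreserving_eval _ j).quasiMeasurePreserving.ae (ae_mem_uniformFinset _)

lemma Assumption1.variance_const_add_mul_sum (hD : Assumption1 P m k ℓ D) (hℓk : ℓ ≤ k)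
    (c₀ c : ℝ) (g : Fin m → (Fin k → Bool) → ℝ) :
    Var[fun ω => c₀ + c * ∑ j, g j (D ω j); P]
      = c ^ 2 * ∑ j, Var[g j; uniformFinset (assignSet k ℓ)] := by
  have := isProbabilityMeasure_uniformFinset (assignSet_nonempty hℓk)
  rw [hD.measurePreserving.variance_fun_comp (f := fun x => c₀ + c * ∑ j, g j (x j))
      Measurable.of_discrete.aemeasurable,
    variance_const_add Measurable.of_discrete.aestronglyMeasurable, variance_const_mul, ← sum_fn,
    variance_sum_pi fun _ => MemLp.of_discrete]

end Design

theorem diff_in_means_representation_general {Ω : Type*} [MeasurableSpace Ω] (P : Measure Ω)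
    (m k ℓ : ℕ) (hk : 2 ≤ k) (hℓ : 0 < ℓ) (hℓk : ℓ < k)
    (Y1 Y0 : Fin m → Fin k → ℝ) (D : Ω → Fin m → Fin k → Bool)
    (hD : Assumption1 P m k ℓ D) :
    (∀ᵐ ω ∂P, hatDelta m k ℓ Y1 Y0 D ω - Delta m k Y1 Y0
        = ((m : ℝ) * k)⁻¹ * ∑ j, ∑ i,
            (Rout m k ℓ Y1 Y0 j i - Rbar m k ℓ Y1 Y0 j) *
              (if D ω j i then 1 else 0)) ∧
    (m : ℝ) * k * variance (hatDelta m k ℓ Y1 Y0 D) P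
      = ((ℓ : ℝ) / k) * (1 - (ℓ : ℝ) / k) / (((k : ℝ) - 1) * m) *
          ∑ j, ∑ i, (Rout m k ℓ Y1 Y0 j i - Rbar m k ℓ Y1 Y0 j) ^ 2 := by
  have hrep := (hD.ae_mem_assignSet hℓk.le).mono fun ω hω => hatDelta_sub_Delta Y1 Y0 D hℓ hℓk ω hω
  refine ⟨hrep, ?_⟩
  rw [variance_congr (hrep.mono fun ω h => eq_add_of_sub_eq' h),
    hD.variance_const_add_mul_sum hℓk.le _ _
      (fun j e => ∑ i, (Rout m k ℓ Y1 Y0 j i - Rbar m k ℓ Y1 Y0 j) * (if e i then 1 else 0))]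
  have hk₀ : (k : ℝ) ≠ 0 := by positivity
  have hk₁ : (k : ℝ) - 1 ≠ 0 := sub_ne_zero.2 (by exact_mod_cast (by omega : k ≠ 1))
  simp only [variance_sum_mul_indicator_assignSet hk hℓk.le _
    (sum_Rout_sub_Rbar Y1 Y0 (by omega) _), ← mul_sum]
  rcases eq_or_ne (m : ℝ) 0 with hm | hm
  · simp [hm]
  field_simp

/-- Under Assumption 1 with `k ≥ 2`: almost surely
`Δ̂ₙ − Δₙ = (1/n) Σⱼ Σ_{i∈λⱼ} (Rᵢ − R̄ⱼ) Dᵢ`, and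
`n·Var[Δ̂ₙ] = (η(1−η)/((k−1)m)) Σⱼ Σ_{i∈λⱼ} (Rᵢ − R̄ⱼ)²`. -/
theorem diff_in_means_representation {Ω : Type*} [MeasurableSpace Ω] (P : Measure Ω)
    [IsProbabilityMeasure P] (m k ℓ : ℕ) (hk : 2 ≤ k) (hℓ : 0 < ℓ) (hℓk : ℓ < k)
    (Y1 Y0 : Fin m → Fin k → ℝ) (D : Ω → Fin m → Fin k → Bool)
    (hD : Assumption1 P m k ℓ D) :
    (∀ᵐ ω ∂P, hatDelta m k ℓ Y1 Y0 D ω - Delta m k Y1 Y0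
        = ((m : ℝ) * k)⁻¹ * ∑ j, ∑ i,
            (Rout m k ℓ Y1 Y0 j i - Rbar m k ℓ Y1 Y0 j) *
              (if D ω j i then 1 else 0)) ∧
    (m : ℝ) * k * variance (hatDelta m k ℓ Y1 Y0 D) P
      = ((ℓ : ℝ) / k) * (1 - (ℓ : ℝ) / k) / (((k : ℝ) - 1) * m) *
          ∑ j, ∑ i, (Rout m k ℓ Y1 Y0 j i - Rbar m k ℓ Y1 Y0 j) ^ 2 :=
  diff_in_means_representation_general P m k ℓ hk hℓ hℓk Y1 Y0 D hD

end DesignBased
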